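/- arXiv:2205.02196 — 3 statements merged into one kernel-verified Lean document; each statement's English description precedes it below -/
import Mathlib

section
/- Let n ≥ 3 and let α be a nonempty partial isometry of the cycle graph C_n. If |Dom(α)| = 1, or |Dom(α)| = 2 with d(min Dom(α), max Dom(α)) = n/2, then there exist exactly two distinct permutations σ, σ' in the dihedral group D_{2n} whose restrictions to Dom(α) equal α. -/
/-- Geodesic distance on the cycle graph `C_n` with vertices `{1,...,n}`:
`d(x,y) = min (|x-y|, n-|x-y|)`. -/
def cdist (n x y : ℕ) : ℕ := min ((x : ℤ) - y).natAbs (n - ((x : ℤ) - y).natAbs)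

/-- The n-cycle permutation `g` of `{1,...,n}`: `i ↦ i+1 (mod n)`. -/
def gfun (n i : ℕ) : ℕ := if i < n then i + 1 else 1

/-- The reversal permutation `h` of `{1,...,n}`: `i ↦ n-i+1`. -/
def hfun (n i : ℕ) : ℕ := n - i + 1

/-- Left-to-right composition of partial maps (apply `f`, then `g`). -/
def pcomp (f g : ℕ → Option ℕ) : ℕ → Option ℕ := fun x => (f x).bind g

/-- The partial identity on `{1,...,n}`. -/
def pid (n : ℕ) : ℕ → Option ℕ := fun i => if i ∈ Finset.Icc 1 n then some i else none

/-- `g` as a partial map with domain `{1,...,n}`. -/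
def gmap (n : ℕ) : ℕ → Option ℕ := fun i => if i ∈ Finset.Icc 1 n then some (gfun n i) else none

/-- `h` as a partial map with domain `{1,...,n}`. -/
def hmap (n : ℕ) : ℕ → Option ℕ := fun i => if i ∈ Finset.Icc 1 n then some (hfun n i) else none

/-- `e_j`: the partial identity with domain `{1,...,n} \ {j}`. -/
def emap (n j : ℕ) : ℕ → Option ℕ := fun i => if i ∈ Finset.Icc 1 n ∧ i ≠ j then some i else none

/-- `k`-th power of a partial map (with identity `pid n`). -/
def ppow (n : ℕ) (f : ℕ → Option ℕ) : ℕ → (ℕ → Option ℕ)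
  | 0 => pid n
  | k + 1 => pcomp f (ppow n f k)

/-- `f` is a partial isometry of the cycle graph `C_n`: a partial injective map on
`{1,...,n}` preserving the cycle distance. -/
def PIso (n : ℕ) (f : ℕ → Option ℕ) : Prop :=
  (∀ x y, f x = some y → x ∈ Finset.Icc 1 n ∧ y ∈ Finset.Icc 1 n) ∧
  (∀ x y z, f x = some z → f y = some z → x = y) ∧
  (∀ x y x' y', f x = some x' → f y = some y' → cdist n x' y' = cdist n x y)

/-- Domain of a partial map, as a set. -/
def DomS (f : ℕ → Option ℕ) : Set ℕ := {x | (f x).isSome}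

/-- Image of a partial map, as a set. -/
def ImS (f : ℕ → Option ℕ) : Set ℕ := {y | ∃ x, f x = some y}

/-- Domain of a partial map on `{1,...,n}`, as a finset. -/
def domF (n : ℕ) (f : ℕ → Option ℕ) : Finset ℕ :=
  (Finset.Icc 1 n).filter (fun x => (f x).isSome)

/-- The dihedral group `D_{2n}` as the set of the permutations `g^k` and `h·g^k`
(acting on the right, so `h·g^k` applies `h` first) of `{1,...,n}`, `0 ≤ k ≤ n-1`. -/
def Dih (n : ℕ) : Set (ℕ → ℕ) :=
  {σ | ∃ k < n, σ = (gfun n)^[k] ∨ σ = fun i => (gfun n)^[k] (hfun n i)}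

/-- `σ` extends the partial map `f`. -/
def Extends (σ : ℕ → ℕ) (f : ℕ → Option ℕ) : Prop := ∀ x y, f x = some y → σ x = y

/-!
Reading points of `{1,...,n}` in `ZMod n`, the rotation `g^k` is `x ↦ x + k` and the reflection
`h·g^k` is `x ↦ 1 - x + k`; each is pinned down by the image of one point, and the two never agree
on both `1` and `2` when `n ≥ 3`. If `f` is defined at a single point `a ↦ b`, both the rotation and
the reflection sending `a` to `b` extend `f`. If `f` is defined at two antipodal points, the second
pair differs from the first by the half-turn `n/2 = -n/2` in both coordinates, so it is again
respected by that rotation and that reflection.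
-/

open Finset

lemma gfun_mem_Icc {n i : ℕ} (hi : i ∈ Icc 1 n) : gfun n i ∈ Icc 1 n := by
  simp only [mem_Icc] at hi ⊢
  unfold gfun
  split <;> omega

lemma hfun_mem_Icc {n i : ℕ} (hi : i ∈ Icc 1 n) : hfun n i ∈ Icc 1 n := by
  simp only [mem_Icc] at hi ⊢
  unfold hfun
  omega

lemma cast_gfun {n i : ℕ} (hi : i ∈ Icc 1 n) : (gfun n i : ZMod n) = i + 1 := by
  rw [mem_Icc] at hi
  unfold gfun
  split
  · push_cast; rfl
  · obtain rfl : i = n := by omega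
    simp

lemma cast_gfun_iterate {n i : ℕ} (hi : i ∈ Icc 1 n) (k : ℕ) :
    ((gfun n)^[k] i : ZMod n) = i + k := by
  induction k generalizing i with
  | zero => simp
  | succ k ih =>
    rw [Function.iterate_succ_apply, ih (gfun_mem_Icc hi), cast_gfun hi]
    push_cast
    ring

lemma cast_hfun {n i : ℕ} (hi : i ∈ Icc 1 n) : (hfun n i : ZMod n) = 1 - i := by
  rw [mem_Icc] at hi
  simp only [hfun, Nat.cast_add, Nat.cast_sub hi.2, ZMod.natCast_self, Nat.cast_one]
  ring

lemma natCast_injOn_Icc (n : ℕ) : Set.InjOn (Nat.cast : ℕ → ZMod n) (Icc 1 n) := by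
  intro y hy z hz h
  simp only [coe_Icc, Set.mem_Icc] at hy hz
  have h' : ((y - 1 : ℕ) : ZMod n) = (z - 1 : ℕ) := by
    rw [Nat.cast_sub hy.1, Nat.cast_sub hz.1, h]
  have := congrArg ZMod.val h'
  rw [ZMod.val_cast_of_lt (by omega), ZMod.val_cast_of_lt (by omega)] at this
  omega

lemma gfun_iterate_eq_iff {n x y : ℕ} (hx : x ∈ Icc 1 n) (hy : y ∈ Icc 1 n) (k : ℕ) :
    (gfun n)^[k] x = y ↔ (x : ZMod n) + k = y := by
  rw [← cast_gfun_iterate hx]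
  refine ((natCast_injOn_Icc n).eq_iff ?_ hy).symm
  induction k with
  | zero => exact hx
  | succ k ih => rw [Function.iterate_succ_apply']; exact gfun_mem_Icc ih

lemma gfun_iterate_hfun_eq_iff {n x y : ℕ} (hx : x ∈ Icc 1 n) (hy : y ∈ Icc 1 n) (k : ℕ) :
    (gfun n)^[k] (hfun n x) = y ↔ 1 - (x : ZMod n) + k = y := by
  rw [gfun_iterate_eq_iff (hfun_mem_Icc hx) hy, cast_hfun hx]

lemma exists_gfun_iterate_ne_gfun_iterate_hfun {n : ℕ} (hn : 3 ≤ n) (k l : ℕ) :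
    ∃ x ∈ Icc 1 n, (gfun n)^[k] x ≠ (gfun n)^[l] (hfun n x) := by
  by_contra! h
  have h1 : (1 : ℕ) ∈ Icc 1 n := mem_Icc.2 ⟨le_rfl, by omega⟩
  have h2 : (2 : ℕ) ∈ Icc 1 n := mem_Icc.2 ⟨by omega, by omega⟩
  have e1 := congrArg (Nat.cast : ℕ → ZMod n) (h 1 h1)
  have e2 := congrArg (Nat.cast : ℕ → ZMod n) (h 2 h2)
  rw [cast_gfun_iterate h1, cast_gfun_iterate (hfun_mem_Icc h1), cast_hfun h1] at e1
  rw [cast_gfun_iterate h2, cast_gfun_iterate (hfun_mem_Icc h2), cast_hfun h2] at e2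
  have h2zero : ((2 : ℕ) : ZMod n) = 0 := by
    push_cast at e1 e2 ⊢
    linear_combination e2 - e1
  have := Nat.le_of_dvd two_pos ((ZMod.natCast_eq_zero_iff 2 n).1 h2zero)
  omega

lemma two_mul_natCast_eq_zero {n c : ℕ} (h : 2 * c = n) : 2 * (c : ZMod n) = 0 := by
  rw [← h]
  exact_mod_cast ZMod.natCast_self (2 * c)

lemma cast_sub_eq_cdist {n x y : ℕ} (hn : 0 < n) (h : 2 * cdist n x y = n) :
    (y : ZMod n) - x = cdist n x y := by
  have hc := two_mul_natCast_eq_zero h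
  have : y = x + cdist n x y ∨ x = y + cdist n x y := by
    unfold cdist at h ⊢
    omega
  generalize cdist n x y = c at this hc ⊢
  rcases this with rfl | rfl <;> push_cast
  · ring
  · linear_combination -hc

lemma PIso.mem_domF {n x y : ℕ} {f : ℕ → Option ℕ} (hf : PIso n f) (h : f x = some y) :
    x ∈ domF n f :=
  mem_filter.2 ⟨(hf.1 x y h).1, by simp [h]⟩

lemma exists_eq_some_of_mem_domF {n x : ℕ} {f : ℕ → Option ℕ} (h : x ∈ domF n f) :
    ∃ y, f x = some y :=
  Option.isSome_iff_exists.1 (mem_filter.1 h).2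

lemma PIso.exists_forall_sub_eq_and_add_eq {n : ℕ} (hn : 0 < n) {f : ℕ → Option ℕ}
    (hf : PIso n f) (hd : (domF n f).card = 1 ∨
      ∃ i j, i < j ∧ domF n f = {i, j} ∧ 2 * cdist n i j = n) :
    ∃ a b, f a = some b ∧ ∀ x y, f x = some y →
      (y : ZMod n) - x = b - a ∧ (y : ZMod n) + x = b + a := by
  rcases hd with hd | ⟨i, j, -, hd, hij⟩
  · obtain ⟨a, ha⟩ := card_eq_one.1 hd
    obtain ⟨b, hab⟩ := exists_eq_some_of_mem_domF (ha ▸ mem_singleton_self a)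
    refine ⟨a, b, hab, fun x y hxy => ?_⟩
    obtain rfl : x = a := mem_singleton.1 (ha ▸ hf.mem_domF hxy)
    obtain rfl : y = b := Option.some_injective _ (hxy.symm.trans hab)
    exact ⟨rfl, rfl⟩
  · obtain ⟨p, hp⟩ := exists_eq_some_of_mem_domF (hd ▸ mem_insert_self i {j})
    obtain ⟨q, hq⟩ := exists_eq_some_of_mem_domF (hd ▸ mem_insert_of_mem (mem_singleton_self j))
    have hpq : 2 * cdist n p q = n := hf.2.2 i j p q hp hq ▸ hij
    have hji := cast_sub_eq_cdist hn hij
    have hqp := cast_sub_eq_cdist hn hpq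
    rw [hf.2.2 i j p q hp hq] at hqp
    have hc := two_mul_natCast_eq_zero hij
    refine ⟨i, p, hp, fun x y hxy => ?_⟩
    rcases mem_insert.1 (hd ▸ hf.mem_domF hxy) with rfl | hx
    · obtain rfl : y = p := Option.some_injective _ (hxy.symm.trans hp)
      exact ⟨rfl, rfl⟩
    · obtain rfl : x = j := mem_singleton.1 hx
      obtain rfl : y = q := Option.some_injective _ (hxy.symm.trans hq)
      constructor
      · linear_combination hqp - hji
      · linear_combination hqp + hji + hc

/-- a nonempty partial isometry of `C_n` whose domain is a singleton, or a
pair at distance `n/2`, has exactly two distinct extensions in `D_{2n}` (distinctness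
and uniqueness as permutations of `{1,...,n}`). -/
theorem stmt_7 (n : ℕ) (hn : 3 ≤ n) (f : ℕ → Option ℕ) (hf : PIso n f)
    (hd : (domF n f).card = 1 ∨
      ∃ i j, i < j ∧ domF n f = {i, j} ∧ 2 * cdist n i j = n) :
    ∃ σ ∈ Dih n, ∃ σ' ∈ Dih n,
      (∃ x ∈ Finset.Icc 1 n, σ x ≠ σ' x) ∧ Extends σ f ∧ Extends σ' f ∧
      ∀ τ ∈ Dih n, Extends τ f →
        (∀ x ∈ Finset.Icc 1 n, τ x = σ x) ∨ (∀ x ∈ Finset.Icc 1 n, τ x = σ' x) := by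
  have : NeZero n := ⟨by omega⟩
  obtain ⟨a, b, hab, hgraph⟩ := hf.exists_forall_sub_eq_and_add_eq (by omega) hd
  obtain ⟨ha, hb⟩ := hf.1 a b hab
  set k := ((b : ZMod n) - a).val
  set l := ((b : ZMod n) + a - 1).val
  refine ⟨(gfun n)^[k], ⟨k, ZMod.val_lt _, .inl rfl⟩, fun x => (gfun n)^[l] (hfun n x),
    ⟨l, ZMod.val_lt _, .inr rfl⟩, exists_gfun_iterate_ne_gfun_iterate_hfun hn k l, ?_, ?_, ?_⟩
  · intro x y hxy
    obtain ⟨hx, hy⟩ := hf.1 x y hxy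
    rw [gfun_iterate_eq_iff hx hy, ZMod.natCast_zmod_val]
    linear_combination -(hgraph x y hxy).1
  · intro x y hxy
    obtain ⟨hx, hy⟩ := hf.1 x y hxy
    rw [gfun_iterate_hfun_eq_iff hx hy, ZMod.natCast_zmod_val]
    linear_combination -(hgraph x y hxy).2
  · rintro τ ⟨m, hm, rfl | rfl⟩ hτ
    · have hm' := (gfun_iterate_eq_iff ha hb m).1 (hτ a b hab)
      obtain rfl : m = k := by
        rw [← ZMod.val_cast_of_lt hm]
        congr 1
        linear_combination hm'
      exact .inl fun _ _ => rfl
    · have hm' := (gfun_iterate_hfun_eq_iff ha hb m).1 (hτ a b hab)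
      obtain rfl : m = l := by
        rw [← ZMod.val_cast_of_lt hm]
        congr 1
        linear_combination hm'
      exact .inr fun _ _ => rfl
end

section
/- For n ≥ 3, every partial isometry of the cycle graph C_n is an oriented partial permutation, i.e. the monoid DPC_n is contained in POR_n ∩ I_n. -/
/-- Number of cyclic descents of a sequence. -/
def descents (s : List ℕ) : ℕ :=
  ((List.range s.length).filter fun i =>
    s.getD ((i + 1) % s.length) 0 < s.getD i 0).length

/-- Number of cyclic ascents of a sequence. -/
def ascents (s : List ℕ) : ℕ :=
  ((List.range s.length).filter fun i =>
    s.getD i 0 < s.getD ((i + 1) % s.length) 0).length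

/-!
A partial isometry `f` of `C_n` preserves the differences `x - y` in `ZMod n` up to sign, and
a map preserving all differences up to sign is affine, `f x = ε x + c` with `ε = ±1`. The number
of cyclic descents of a sequence in `{1, …, n}` is `1/n` times the sum of its consecutive cyclic
differences reduced mod `n`, so it only depends on those differences mod `n`: translating the
increasing sequence of the domain leaves its (at most one) cyclic descent count unchanged, and
reflecting it turns descents into ascents.
-/

open Finset

theorem List.getD_mem_of_lt {α : Type*} {l : List α} {i : ℕ} (d : α) (hi : i < l.length) :
    l.getD i d ∈ l := by
  rw [List.getD_eq_getElem _ _ hi]; exact List.getElem_mem hi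

theorem List.getD_map_of_lt {α β : Type*} {l : List α} {i : ℕ} (F : α → β) (d : α) (d' : β)
    (hi : i < l.length) : (l.map F).getD i d' = F (l.getD i d) := by
  simp [List.getD_eq_getElem?_getD, hi]

theorem cdist_eq_natAbs_valMinAbs {n x y : ℕ} [NeZero n] (h : ((x : ℤ) - y).natAbs < n) :
    cdist n x y = ((x : ZMod n) - y).valMinAbs.natAbs := by
  set m := ((x : ℤ) - y).natAbs
  have hcast : (x : ZMod n) - y = (((x : ℤ) - y : ℤ) : ZMod n) := by push_cast; ring
  have hm : (x : ZMod n) - y = m ∨ (x : ZMod n) - y = -m := by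
    rcases Int.natAbs_eq ((x : ℤ) - y) with h | h
    · left; rw [hcast, h, Int.cast_natCast]
    · right; rw [hcast, h, Int.cast_neg, Int.cast_natCast]
  rw [ZMod.natAbs_valMinAbs_eq_natAbs_valMinAbs.mpr hm, ZMod.valMinAbs_natAbs_eq_min,
    ZMod.val_natCast_of_lt h]
  rfl

theorem PIso.natCast_sub_eq_or_eq_neg {n : ℕ} [NeZero n] {f : ℕ → Option ℕ} (hf : PIso n f)
    {x y x' y' : ℕ} (hx : f x = some x') (hy : f y = some y') :
    (x' : ZMod n) - y' = x - y ∨ (x' : ZMod n) - y' = -(x - y) := by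
  have hdom := hf.1 x x' hx
  have hdom' := hf.1 y y' hy
  simp only [mem_Icc] at hdom hdom'
  have hdist := hf.2.2 x y x' y' hx hy
  rwa [cdist_eq_natAbs_valMinAbs (by omega), cdist_eq_natAbs_valMinAbs (by omega),
    ZMod.natAbs_valMinAbs_eq_natAbs_valMinAbs] at hdist

section Affine

variable {ι R : Type*} [CommRing R] {u v : ι → R}

theorem eq_add_of_sub_eq_or_eq_neg_of_two_mul_ne_zero
    (h : ∀ i j, v i - v j = u i - u j ∨ v i - v j = -(u i - u j)) {i j : ι}
    (hij : 2 * (u i - u j) ≠ 0) (hvij : v i - v j = u i - u j) (k : ι) :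
    v k = u k + (v i - u i) := by
  rcases h k i with hki | hki
  · linear_combination hki
  rcases h k j with hkj | hkj
  · linear_combination hkj - hvij
  · exact absurd (by linear_combination hkj - hki - hvij) hij

theorem exists_eq_mul_add_of_sub_eq_or_eq_neg
    (h : ∀ i j, v i - v j = u i - u j ∨ v i - v j = -(u i - u j)) :
    ∃ ε c : R, (ε = 1 ∨ ε = -1) ∧ ∀ i, v i = ε * u i + c := by
  by_cases hrigid : ∃ i j, 2 * (u i - u j) ≠ 0
  · obtain ⟨i, j, hij⟩ := hrigid
    rcases h i j with hvij | hvij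
    · exact ⟨1, v i - u i, Or.inl rfl, fun k => by
        rw [one_mul]; exact eq_add_of_sub_eq_or_eq_neg_of_two_mul_ne_zero h hij hvij k⟩
    · have h' : ∀ i j, -v i - -v j = u i - u j ∨ -v i - -v j = -(u i - u j) := fun i j =>
        (h i j).symm.imp (fun e => by linear_combination -e) (fun e => by linear_combination -e)
      refine ⟨-1, v i + u i, Or.inr rfl, fun k => ?_⟩
      have := eq_add_of_sub_eq_or_eq_neg_of_two_mul_ne_zero (v := fun i => -v i) h' hij
        (by linear_combination -hvij) k
      linear_combination -this
  · push Not at hrigid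
    cases isEmpty_or_nonempty ι with
    | inl => exact ⟨1, 0, Or.inl rfl, isEmptyElim⟩
    | inr hne =>
      obtain ⟨i⟩ := hne
      refine ⟨1, v i - u i, Or.inl rfl, fun k => ?_⟩
      rcases h k i with hki | hki
      · linear_combination hki
      · linear_combination hki - hrigid k i

end Affine

theorem PIso.exists_natCast_eq_mul_add {n : ℕ} [NeZero n] {f : ℕ → Option ℕ} (hf : PIso n f) :
    ∃ ε c : ZMod n, (ε = 1 ∨ ε = -1) ∧ ∀ x y, f x = some y → (y : ZMod n) = ε * x + c := by
  obtain ⟨ε, c, hε, hfc⟩ := exists_eq_mul_add_of_sub_eq_or_eq_neg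
    (u := fun p : {p : ℕ × ℕ // f p.1 = some p.2} => (p.1.1 : ZMod n))
    (v := fun p => (p.1.2 : ZMod n)) fun p q => hf.natCast_sub_eq_or_eq_neg p.2 q.2
  exact ⟨ε, c, hε, fun x y hxy => hfc ⟨(x, y), hxy⟩⟩

theorem sum_range_succ_mod {M : Type*} [AddCommMonoid M] (g : ℕ → M) (m : ℕ) :
    ∑ i ∈ range m, g ((i + 1) % m) = ∑ i ∈ range m, g i := by
  cases m with
  | zero => rfl
  | succ m =>
    rw [sum_range_succ, sum_range_succ', Nat.mod_self]
    congr 1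
    exact sum_congr rfl fun i hi => by rw [Nat.mod_eq_of_lt (by simp at hi; omega)]

theorem natCast_sub_emod_of_mem_Icc {n a b : ℕ} (ha : a ∈ Icc 1 n) (hb : b ∈ Icc 1 n) :
    ((b : ℤ) - a) % n = b - a + if b < a then (n : ℤ) else 0 := by
  simp only [mem_Icc] at ha hb
  split_ifs with hba
  · rw [← Int.add_emod_right]
    exact Int.emod_eq_of_lt (by omega) (by omega)
  · rw [add_zero]
    exact Int.emod_eq_of_lt (by omega) (by omega)

theorem natCast_mul_descents_eq_sum {n : ℕ} {s : List ℕ} (hs : ∀ x ∈ s, x ∈ Icc 1 n) :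
    (n * descents s : ℤ) =
      ∑ i ∈ range s.length, (((s.getD ((i + 1) % s.length) 0 : ℤ) - s.getD i 0) % n) := by
  have hget : ∀ i < s.length, s.getD i 0 ∈ Icc 1 n := fun i hi => hs _ (s.getD_mem_of_lt 0 hi)
  have hterm : ∀ i ∈ range s.length,
      (((s.getD ((i + 1) % s.length) 0 : ℤ) - s.getD i 0) % n) =
        (s.getD ((i + 1) % s.length) 0 : ℤ) - s.getD i 0 +
          if s.getD ((i + 1) % s.length) 0 < s.getD i 0 then (n : ℤ) else 0 := fun i hi => by
    rw [mem_range] at hi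
    exact natCast_sub_emod_of_mem_Icc (hget i hi) (hget _ (Nat.mod_lt _ (by omega)))
  rw [sum_congr rfl hterm, sum_add_distrib, sum_sub_distrib,
    sum_range_succ_mod (fun j => (s.getD j 0 : ℤ)), sub_self, zero_add, ← sum_filter, sum_const,
    nsmul_eq_mul, mul_comm]
  rfl

theorem descents_map_eq_of_natCast_eq_add {n : ℕ} [NeZero n] {s : List ℕ} {F : ℕ → ℕ}
    (c : ZMod n) (hs : ∀ x ∈ s, x ∈ Icc 1 n) (hF : ∀ x ∈ s, F x ∈ Icc 1 n)
    (hFc : ∀ x ∈ s, (F x : ZMod n) = x + c) :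
    descents (s.map F) = descents s := by
  have hsum : ∑ i ∈ range (s.map F).length,
      ((((s.map F).getD ((i + 1) % (s.map F).length) 0 : ℤ) - (s.map F).getD i 0) % n) =
      ∑ i ∈ range s.length, (((s.getD ((i + 1) % s.length) 0 : ℤ) - s.getD i 0) % n) := by
    rw [List.length_map]
    refine sum_congr rfl fun i hi => ?_
    rw [mem_range] at hi
    have hi' : (i + 1) % s.length < s.length := Nat.mod_lt _ (by omega)
    rw [List.getD_map_of_lt F 0 0 hi, List.getD_map_of_lt F 0 0 hi',
      ← ZMod.intCast_eq_intCast_iff']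
    push_cast
    rw [hFc _ (s.getD_mem_of_lt 0 hi), hFc _ (s.getD_mem_of_lt 0 hi')]
    ring
  have hn : (n : ℤ) ≠ 0 := Nat.cast_ne_zero.mpr (NeZero.ne n)
  rw [← natCast_mul_descents_eq_sum (List.forall_mem_map.mpr hF),
    ← natCast_mul_descents_eq_sum hs] at hsum
  exact_mod_cast mul_left_cancel₀ hn hsum

theorem ascents_eq_descents_map_sub {m : ℕ} {s : List ℕ} (hs : ∀ x ∈ s, x ≤ m) :
    ascents s = descents (s.map (m - ·)) := by
  simp only [ascents, descents, List.length_map]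
  congr 1
  refine List.filter_congr fun i hi => ?_
  rw [List.mem_range] at hi
  have hi' : (i + 1) % s.length < s.length := Nat.mod_lt _ (by omega)
  have := hs _ (s.getD_mem_of_lt 0 hi)
  have := hs _ (s.getD_mem_of_lt 0 hi')
  rw [List.getD_map_of_lt _ 0 0 hi, List.getD_map_of_lt _ 0 0 hi']
  simp only [decide_eq_decide]
  omega

theorem ascents_map_eq_of_natCast_eq_neg_add {n : ℕ} [NeZero n] {s : List ℕ} {F : ℕ → ℕ}
    (c : ZMod n) (hs : ∀ x ∈ s, x ∈ Icc 1 n) (hF : ∀ x ∈ s, F x ∈ Icc 1 n)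
    (hFc : ∀ x ∈ s, (F x : ZMod n) = -x + c) :
    ascents (s.map F) = descents s := by
  rw [ascents_eq_descents_map_sub (m := n + 1), List.map_map]
  · refine descents_map_eq_of_natCast_eq_add (1 - c) hs (fun x hx => ?_) fun x hx => ?_
    · have := mem_Icc.mp (hF x hx)
      simp only [Function.comp_apply, mem_Icc]
      omega
    · have := mem_Icc.mp (hF x hx)
      rw [Function.comp_apply, Nat.cast_sub (by omega), hFc x hx]
      push_cast
      rw [ZMod.natCast_self]
      ring
  · intro y hy
    obtain ⟨x, hx, rfl⟩ := List.mem_map.mp hy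
    exact Nat.le_succ_of_le (mem_Icc.mp (hF x hx)).2

theorem descents_le_one_of_pairwise_lt {s : List ℕ} (hs : s.Pairwise (· < ·)) :
    descents s ≤ 1 := by
  have hsub : (range s.length).filter
      (fun i => s.getD ((i + 1) % s.length) 0 < s.getD i 0) ⊆ {s.length - 1} := by
    intro i hi
    rw [mem_filter, mem_range] at hi
    obtain ⟨hi, hdesc⟩ := hi
    rw [mem_singleton]
    by_contra hne
    have hi' : i + 1 < s.length := by omega
    rw [Nat.mod_eq_of_lt hi', List.getD_eq_getElem _ _ hi', List.getD_eq_getElem _ _ hi] at hdesc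
    exact (List.pairwise_iff_getElem.mp hs i (i + 1) hi hi' (by omega)).asymm hdesc
  exact (card_le_card hsub).trans (card_singleton _).le

theorem stmt_9_general (n : ℕ) (f : ℕ → Option ℕ) (hf : PIso n f) :
    descents (((domF n f).sort (· ≤ ·)).map fun x => (f x).getD 0) ≤ 1 ∨
    ascents (((domF n f).sort (· ≤ ·)).map fun x => (f x).getD 0) ≤ 1 := by
  rcases Nat.eq_zero_or_pos n with rfl | hn
  · left; simp [domF, descents]
  have : NeZero n := ⟨hn.ne'⟩
  set l := (domF n f).sort (· ≤ ·)
  set F := fun x => (f x).getD 0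
  have hfl : ∀ x ∈ l, x ∈ Icc 1 n ∧ f x = some (F x) := fun x hx => by
    obtain ⟨hx, hfx⟩ := mem_filter.mp ((domF n f).mem_sort _ |>.mp hx)
    obtain ⟨y, hy⟩ := Option.isSome_iff_exists.mp hfx
    simp [F, hx, hy]
  have hFl : ∀ x ∈ l, F x ∈ Icc 1 n := fun x hx => (hf.1 _ _ (hfl x hx).2).2
  have hdesc : descents l ≤ 1 := descents_le_one_of_pairwise_lt (sortedLT_sort _).pairwise
  obtain ⟨ε, c, hε | hε, hfc⟩ := hf.exists_natCast_eq_mul_add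
  · left
    rwa [descents_map_eq_of_natCast_eq_add c (fun x hx => (hfl x hx).1) hFl
      fun x hx => by rw [hfc _ _ (hfl x hx).2, hε, one_mul]]
  · right
    rwa [ascents_map_eq_of_natCast_eq_neg_add c (fun x hx => (hfl x hx).1) hFl
      fun x hx => by rw [hfc _ _ (hfl x hx).2, hε, neg_one_mul]]

/-- every partial isometry of `C_n` is oriented: listing the domain in
increasing order, the sequence of images is cyclic (≤ 1 cyclic descent) or anti-cyclic
(≤ 1 cyclic ascent). -/
theorem stmt_9 (n : ℕ) (hn : 3 ≤ n) (f : ℕ → Option ℕ) (hf : PIso n f) :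
    descents (((domF n f).sort (· ≤ ·)).map fun x => (f x).getD 0) ≤ 1 ∨
    ascents (((domF n f).sort (· ≤ ·)).map fun x => (f x).getD 0) ≤ 1 :=
  stmt_9_general n f hf
end

section
/- For n ≥ 3 and 1 ≤ j ≤ n, the identity e_j = h·g^{j-1}·e_n·h·g^{j-1} holds in DPC_n, where e_i denotes the partial identity with domain {1,...,n} \ {i}, g is the n-cycle, and h the reversal. -/
/-! The map `h·g^{j-1}` (apply `h`, then `g^{j-1}`) is the reflection of the cycle `C_n`
exchanging `n` and `j`; it is an involution because `g·h·g = h`. Conjugating the partial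
identity `e_m` by an involution `σ` gives `e_{σ m}`, which for `m = n` is `e_j`. -/

def pmapOn (s : Finset ℕ) (σ : ℕ → ℕ) : ℕ → Option ℕ := fun i => if i ∈ s then some (σ i) else none

lemma gmap_eq_pmapOn (n : ℕ) : gmap n = pmapOn (Finset.Icc 1 n) (gfun n) := rfl

lemma hmap_eq_pmapOn (n : ℕ) : hmap n = pmapOn (Finset.Icc 1 n) (hfun n) := rfl

lemma pcomp_assoc (f g k : ℕ → Option ℕ) : pcomp f (pcomp g k) = pcomp (pcomp f g) k :=
  funext fun x => (Option.bind_assoc (f x) g k).symm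

lemma pcomp_pmapOn {s : Finset ℕ} {σ : ℕ → ℕ} (hσ : Set.MapsTo σ s s) (τ : ℕ → ℕ) :
    pcomp (pmapOn s σ) (pmapOn s τ) = pmapOn s (τ ∘ σ) := by
  funext x
  by_cases hx : x ∈ s
  · have hσx : σ x ∈ s := hσ hx
    simp [pcomp, pmapOn, hx, hσx]
  · simp [pcomp, pmapOn, hx]

lemma ppow_pmapOn {n : ℕ} {σ : ℕ → ℕ} (hσ : Set.MapsTo σ (Finset.Icc 1 n) (Finset.Icc 1 n))
    (k : ℕ) : ppow n (pmapOn (Finset.Icc 1 n) σ) k = pmapOn (Finset.Icc 1 n) σ^[k] := by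
  induction k with
  | zero => rfl
  | succ k ih => rw [ppow, ih, pcomp_pmapOn hσ, Function.iterate_succ]

lemma pcomp_emap_pmapOn_of_involutive {n m : ℕ} {σ : ℕ → ℕ}
    (hσ : Set.MapsTo σ (Finset.Icc 1 n) (Finset.Icc 1 n))
    (hinv : ∀ x ∈ Finset.Icc 1 n, σ (σ x) = x) (hm : m ∈ Finset.Icc 1 n) :
    pcomp (pmapOn (Finset.Icc 1 n) σ) (pcomp (emap n m) (pmapOn (Finset.Icc 1 n) σ)) =
      emap n (σ m) := by
  funext x
  by_cases hx : x ∈ Finset.Icc 1 n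
  · have hσx_mem : σ x ∈ Finset.Icc 1 n := hσ hx
    have hσx : σ x ≠ m ↔ x ≠ σ m :=
      ⟨fun h hxm => h (hxm ▸ hinv m hm), fun h hxm => h (hxm ▸ (hinv x hx).symm)⟩
    simp only [pcomp, pmapOn, emap, if_pos hx, Option.bind_some]
    by_cases hxm : x = σ m
    · rw [if_neg (fun h => hσx.not_left.mpr hxm h.2), if_neg (fun h => h.2 hxm), Option.bind_none]
    · rw [if_pos ⟨hσx_mem, hσx.mpr hxm⟩, if_pos ⟨hx, hxm⟩, Option.bind_some, pmapOn,
        if_pos hσx_mem, hinv x hx]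
  · simp only [pcomp, pmapOn, emap, if_neg hx, Option.bind_none]
    exact (if_neg fun h => hx h.1).symm

lemma iterate_conj_of_conj {α : Type*} {s : Set α} {f h : α → α} (hf : Set.MapsTo f s s)
    (hconj : ∀ x ∈ s, f (h (f x)) = h x) (k : ℕ) : ∀ x ∈ s, f^[k] (h (f^[k] x)) = h x := by
  induction k with
  | zero => simp
  | succ k ih =>
    intro x hx
    rw [Function.iterate_succ_apply, Function.iterate_succ_apply',
      hconj _ (hf.iterate k hx), ih x hx]

lemma gfun_mapsTo (n : ℕ) : Set.MapsTo (gfun n) (Finset.Icc 1 n) (Finset.Icc 1 n) := by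
  intro x hx
  simp only [Finset.coe_Icc, Set.mem_Icc, gfun] at hx ⊢
  split <;> omega

lemma hfun_mapsTo (n : ℕ) : Set.MapsTo (hfun n) (Finset.Icc 1 n) (Finset.Icc 1 n) := by
  intro x hx
  simp only [Finset.coe_Icc, Set.mem_Icc, hfun] at hx ⊢
  omega

lemma hfun_hfun {n x : ℕ} (hx : x ∈ Finset.Icc 1 n) : hfun n (hfun n x) = x := by
  simp only [Finset.mem_Icc, hfun] at hx ⊢
  omega

lemma gfun_hfun_gfun {n x : ℕ} (hx : x ∈ Finset.Icc 1 n) :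
    gfun n (hfun n (gfun n x)) = hfun n x := by
  simp only [Finset.mem_Icc, gfun, hfun] at hx ⊢
  split_ifs <;> omega

lemma gfun_iterate_one {n k : ℕ} (hk : k < n) : (gfun n)^[k] 1 = k + 1 := by
  induction k with
  | zero => rfl
  | succ k ih => rw [Function.iterate_succ_apply', ih (by omega), gfun, if_pos (by omega)]

lemma gfun_iterate_hfun_involutive {n x : ℕ} (k : ℕ) (hx : x ∈ Finset.Icc 1 n) :
    (gfun n)^[k] (hfun n ((gfun n)^[k] (hfun n x))) = x := by
  rw [iterate_conj_of_conj (gfun_mapsTo n) (fun y hy => gfun_hfun_gfun hy) k _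
    (hfun_mapsTo n hx), hfun_hfun hx]

theorem stmt_15_general (n : ℕ) (j : ℕ) (hj : j ∈ Finset.Icc 1 n) :
    emap n j = pcomp (hmap n) (pcomp (ppow n (gmap n) (j - 1))
      (pcomp (emap n n) (pcomp (hmap n) (ppow n (gmap n) (j - 1))))) := by
  have hn : n ∈ Finset.Icc 1 n := by simp only [Finset.mem_Icc] at hj ⊢; omega
  have hreflection : pcomp (hmap n) (ppow n (gmap n) (j - 1)) =
      pmapOn (Finset.Icc 1 n) ((gfun n)^[j - 1] ∘ hfun n) := by
    rw [gmap_eq_pmapOn, hmap_eq_pmapOn, ppow_pmapOn (gfun_mapsTo n),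
      pcomp_pmapOn (hfun_mapsTo n)]
  have hjn : ((gfun n)^[j - 1] ∘ hfun n) n = j := by
    simp only [Finset.mem_Icc] at hj
    rw [Function.comp_apply, hfun, Nat.sub_self, gfun_iterate_one (by omega)]
    omega
  rw [pcomp_assoc, hreflection, pcomp_emap_pmapOn_of_involutive
    (((gfun_mapsTo n).iterate _).comp (hfun_mapsTo n))
    (fun x hx => gfun_iterate_hfun_involutive _ hx) hn, hjn]

/-- `e_j = h·g^{j-1}·e_n·h·g^{j-1}` in `DPC_n` (composition left-to-right:
`h` applied first). -/
theorem stmt_15 (n : ℕ) (hn : 3 ≤ n) (j : ℕ) (hj : j ∈ Finset.Icc 1 n) :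
    emap n j = pcomp (hmap n) (pcomp (ppow n (gmap n) (j - 1))
      (pcomp (emap n n) (pcomp (hmap n) (ppow n (gmap n) (j - 1))))) :=
  stmt_15_general n j hj
end
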